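/- arXiv:2309.02816 — 4 statements merged into one kernel-verified Lean document; each statement's English description precedes it below -/
import Mathlib

section
/- The recoverable robust shortest path problem min over X in Φ of (Σ_{e∈X} C_e + max over S in U of min over Y in Φ(X,k) of Σ_{e∈Y} c_e^S) has the same optimal value as the recoverable shortest path problem min over X in Φ and Y in Φ(X,k) of (Σ_{e∈X} C_e + Σ_{e∈Y} c̄_e), where c̄_e = ĉ_e + Δ_e. -/
/-!
For a fixed first-stage path `X`, the inner value `min_{Y ∈ Φ(X,k)} Σ_{e∈Y} c_e` is monotone in
the cost vector `c`, so the adversary's best choice in the box `U` is its top corner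
`c̄ = ĉ + Δ`. The robust problem thus becomes `min_X (Σ_X C + min_{Y ∈ Φ(X,k)} Σ_Y c̄)`, and
a minimum of minima over the finite set `Φ` is the joint minimum over the pairs `(X, Y)`.
-/

open Finset

section FiniteMinima

variable {ι κ : Type*}

theorem finite_setOf_exists_mem_and_eq (t : Finset κ) (P : κ → Prop) (f : κ → ℝ) :
    {z : ℝ | ∃ j ∈ t, P j ∧ z = f j}.Finite :=
  (t.finite_toSet.image f).subset (by rintro _ ⟨j, hj, -, rfl⟩; exact ⟨j, hj, rfl⟩)

theorem csInf_setOf_exists_mem_and_eq_le {t : Finset κ} {P : κ → Prop} (f : κ → ℝ) {j : κ}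
    (hj : j ∈ t) (hPj : P j) : sInf {z : ℝ | ∃ j ∈ t, P j ∧ z = f j} ≤ f j :=
  csInf_le (finite_setOf_exists_mem_and_eq t P f).bddBelow ⟨j, hj, hPj, rfl⟩

theorem exists_eq_csInf_setOf_exists_mem_and_eq {t : Finset κ} {P : κ → Prop} (f : κ → ℝ)
    (hP : ∃ j ∈ t, P j) : ∃ j ∈ t, P j ∧ sInf {z : ℝ | ∃ j ∈ t, P j ∧ z = f j} = f j := by
  obtain ⟨j, hj, hPj⟩ := hP
  have hne : {z : ℝ | ∃ j ∈ t, P j ∧ z = f j}.Nonempty := ⟨_, j, hj, hPj, rfl⟩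
  exact hne.csInf_mem (finite_setOf_exists_mem_and_eq t P f)

theorem csInf_setOf_exists_mem_and_eq_mono (t : Finset κ) (P : κ → Prop) {f g : κ → ℝ}
    (hfg : ∀ j ∈ t, f j ≤ g j) :
    sInf {z : ℝ | ∃ j ∈ t, P j ∧ z = f j} ≤ sInf {z : ℝ | ∃ j ∈ t, P j ∧ z = g j} := by
  by_cases hP : ∃ j ∈ t, P j
  · obtain ⟨j, hj, hPj, hmin⟩ := exists_eq_csInf_setOf_exists_mem_and_eq g hP
    rw [hmin]
    exact (csInf_setOf_exists_mem_and_eq_le f hj hPj).trans (hfg j hj)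
  · have hempty (h : κ → ℝ) : {z : ℝ | ∃ j ∈ t, P j ∧ z = h j} = ∅ :=
      Set.eq_empty_iff_forall_notMem.2 fun _ ⟨j, hj, hPj, _⟩ => hP ⟨j, hj, hPj⟩
    rw [hempty f, hempty g]

theorem csInf_add_csInf_eq_csInf_add (s : Finset ι) (t : Finset κ) (a : ι → ℝ) (b : κ → ℝ)
    (R : ι → κ → Prop) (hR : ∀ i ∈ s, ∃ j ∈ t, R i j) :
    sInf {v : ℝ | ∃ i ∈ s, v = a i + sInf {z : ℝ | ∃ j ∈ t, R i j ∧ z = b j}} =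
      sInf {v : ℝ | ∃ i ∈ s, ∃ j ∈ t, R i j ∧ v = a i + b j} := by
  rcases s.eq_empty_or_nonempty with rfl | ⟨i₀, hi₀⟩
  · simp
  have houter_bdd :
      BddBelow {v : ℝ | ∃ i ∈ s, v = a i + sInf {z : ℝ | ∃ j ∈ t, R i j ∧ z = b j}} :=
    ((s.finite_toSet.image _).subset (by rintro _ ⟨i, hi, rfl⟩; exact ⟨i, hi, rfl⟩)).bddBelow
  have hpairs_bdd : BddBelow {v : ℝ | ∃ i ∈ s, ∃ j ∈ t, R i j ∧ v = a i + b j} :=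
    ((s.finite_toSet.image2 (fun i j => a i + b j) t.finite_toSet).subset
      (by rintro _ ⟨i, hi, j, hj, -, rfl⟩; exact ⟨i, hi, j, hj, rfl⟩)).bddBelow
  apply le_antisymm
  · obtain ⟨j₀, hj₀, hR₀⟩ := hR i₀ hi₀
    refine le_csInf ⟨_, i₀, hi₀, j₀, hj₀, hR₀, rfl⟩ ?_
    rintro _ ⟨i, hi, j, hj, hij, rfl⟩
    calc _ ≤ a i + sInf {z : ℝ | ∃ j ∈ t, R i j ∧ z = b j} := csInf_le houter_bdd ⟨i, hi, rfl⟩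
      _ ≤ a i + b j := add_le_add_right (csInf_setOf_exists_mem_and_eq_le b hj hij) _
  · refine le_csInf ⟨_, i₀, hi₀, rfl⟩ ?_
    rintro _ ⟨i, hi, rfl⟩
    obtain ⟨j, hj, hij, hmin⟩ := exists_eq_csInf_setOf_exists_mem_and_eq b (hR i hi)
    rw [hmin]
    exact csInf_le hpairs_bdd ⟨i, hi, j, hj, hij, rfl⟩

end FiniteMinima

theorem csSup_box_csInf_sum_eq {α : Type*} (t : Finset (Finset α)) (P : Finset α → Prop)
    {lo hi : α → ℝ} (hlo : lo ≤ hi) :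
    sSup {w : ℝ | ∃ c : α → ℝ, (∀ e, lo e ≤ c e ∧ c e ≤ hi e) ∧
        w = sInf {z : ℝ | ∃ Y ∈ t, P Y ∧ z = ∑ e ∈ Y, c e}} =
      sInf {z : ℝ | ∃ Y ∈ t, P Y ∧ z = ∑ e ∈ Y, hi e} :=
  IsGreatest.csSup_eq ⟨⟨hi, fun e => ⟨hlo e, le_rfl⟩, rfl⟩, by
    rintro _ ⟨c, hc, rfl⟩
    exact csInf_setOf_exists_mem_and_eq_mono t P fun Y _ => sum_le_sum fun e _ => (hc e).2⟩

theorem rob_rec_sp_eq_rec_sp_general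
    {α : Type*} [DecidableEq α]
    (C chat Δ : α → ℝ)
    (hΔ : ∀ e, 0 ≤ Δ e)
    (Φ : Finset (Finset α)) (k : ℕ)
    (hnbhd : ∀ X ∈ Φ, ∃ Y ∈ Φ, (Y \ X).card ≤ k) :
    sInf {v : ℝ | ∃ X ∈ Φ,
        v = (∑ e ∈ X, C e) +
          sSup {w : ℝ | ∃ c : α → ℝ,
            (∀ e, chat e ≤ c e ∧ c e ≤ chat e + Δ e) ∧
            w = sInf {z : ℝ | ∃ Y ∈ Φ, (Y \ X).card ≤ k ∧
                  z = ∑ e ∈ Y, c e}}} =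
    sInf {v : ℝ | ∃ X ∈ Φ, ∃ Y ∈ Φ, (Y \ X).card ≤ k ∧
        v = (∑ e ∈ X, C e) + ∑ e ∈ Y, (chat e + Δ e)} := by
  have hworst (X : Finset α) :
      sSup {w : ℝ | ∃ c : α → ℝ, (∀ e, chat e ≤ c e ∧ c e ≤ chat e + Δ e) ∧
          w = sInf {z : ℝ | ∃ Y ∈ Φ, (Y \ X).card ≤ k ∧ z = ∑ e ∈ Y, c e}} =
        sInf {z : ℝ | ∃ Y ∈ Φ, (Y \ X).card ≤ k ∧ z = ∑ e ∈ Y, (chat e + Δ e)} :=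
    csSup_box_csInf_sum_eq Φ _ fun e => le_add_of_nonneg_right (hΔ e)
  simp only [hworst]
  exact csInf_add_csInf_eq_csInf_add Φ Φ _ _ (fun X Y => (Y \ X).card ≤ k) hnbhd

/-- The recoverable robust shortest path problem
`min_{X∈Φ} (Σ_{e∈X} C_e + max_{S∈U} min_{Y∈Φ(X,k)} Σ_{e∈Y} c_e^S)`
has the same optimal value as the recoverable shortest path problem
`min_{X∈Φ, Y∈Φ(X,k)} (Σ_{e∈X} C_e + Σ_{e∈Y} (ĉ_e + Δ_e))`. -/
theorem rob_rec_sp_eq_rec_sp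
    {α : Type*} [DecidableEq α]
    (C chat Δ : α → ℝ) (hC : ∀ e, 0 ≤ C e)
    (hchat : ∀ e, 0 ≤ chat e) (hΔ : ∀ e, 0 ≤ Δ e)
    (Φ : Finset (Finset α)) (hΦ : Φ.Nonempty) (k : ℕ)
    (hnbhd : ∀ X ∈ Φ, ∃ Y ∈ Φ, (Y \ X).card ≤ k) :
    sInf {v : ℝ | ∃ X ∈ Φ,
        v = (∑ e ∈ X, C e) +
          sSup {w : ℝ | ∃ c : α → ℝ,
            (∀ e, chat e ≤ c e ∧ c e ≤ chat e + Δ e) ∧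
            w = sInf {z : ℝ | ∃ Y ∈ Φ, (Y \ X).card ≤ k ∧
                  z = ∑ e ∈ Y, c e}}} =
    sInf {v : ℝ | ∃ X ∈ Φ, ∃ Y ∈ Φ, (Y \ X).card ≤ k ∧
        v = (∑ e ∈ X, C e) + ∑ e ∈ Y, (chat e + Δ e)} :=
  rob_rec_sp_eq_rec_sp_general C chat Δ hΔ Φ k hnbhd
end

section
/- Constructed instance equivalence for layered graphs: given the auxiliary graph G' built from a layered multidigraph G (with type-0 arcs (i,j) of cost min over parallel arcs of C_e + c̄_e and transition time 0, and type-1 arcs (i,j) of cost equal to the sum of the C-shortest i-j path cost and the c̄-shortest i-j path cost, with transition time |Y*_{ij} \ X*_{ij}|, added whenever j is reachable from i within at most k layers), there exists a pair of paths X ∈ Φ and Y ∈ Φ(X,k) in G with total cost Σ_{e∈X} C_e + Σ_{e∈Y} c̄_e ≤ UB if and only if there exists an s-t path π in G' with total transition time at most k and total cost Σ_{e∈π} c_e ≤ UB. -/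
/-- A directed walk from `u` to `w`, given as the list of its arcs
(also used for walks in the auxiliary graph `G'`, whose arcs are steps). -/
def IsWalk {V α : Type*} (src tgt : α → V) : V → V → List α → Prop
  | u, w, [] => u = w
  | u, w, e :: p => src e = u ∧ IsWalk src tgt (tgt e) w p

/-- A directed simple path from `u` to `w` (no repeated nodes). -/
def IsSimplePath {V α : Type*} (src tgt : α → V) (u w : V) (p : List α) : Prop :=
  IsWalk src tgt u w p ∧ (u :: p.map tgt).Nodup

/-- An arc of the auxiliary graph `G'`: endpoints and a flag
(`false` = type-0 arc, `true` = type-1 arc). -/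
abbrev Step (V : Type*) := V × V × Bool

/-- Validity of an arc of `G'`: a type-0 arc `(i,j)` needs an arc of `G` from
`i` to `j`; a type-1 arc `(i,j)` needs `j` reachable from `i` with
`layer j - layer i ≤ k`. -/
def StepValid {V α : Type*} (src tgt : α → V) (layer : V → ℕ) (k : ℕ) :
    Step V → Prop
  | (i, j, false) => ∃ e : α, src e = i ∧ tgt e = j
  | (i, j, true) =>
      (∃ p : List α, p ≠ [] ∧ IsSimplePath src tgt i j p) ∧
        layer j - layer i ≤ k

/-- The cost of an arc of `G'`: type-0 arcs cost
`min { C_e + c̄_e : e an arc from i to j }`; the type-1 arc `(i,j)` costs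
`Σ_{e ∈ X*_{ij}} C_e + Σ_{e ∈ Y*_{ij}} c̄_e`. -/
noncomputable def stepCost {V α : Type*} (src tgt : α → V) (C cbar : α → ℝ)
    (Xstar Ystar : V → V → List α) : Step V → ℝ
  | (i, j, false) => sInf {x : ℝ | ∃ e : α, src e = i ∧ tgt e = j ∧
      x = C e + cbar e}
  | (i, j, true) => ((Xstar i j).map C).sum + ((Ystar i j).map cbar).sum

/-- The transition time of an arc of `G'`: `0` for type-0 arcs and
`|Y*_{ij} \ X*_{ij}|` for the type-1 arc `(i,j)`. -/
def stepTime {V α : Type*} [DecidableEq α]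
    (Xstar Ystar : V → V → List α) : Step V → ℕ
  | (_, _, false) => 0
  | (i, j, true) => ((Ystar i j).toFinset \ (Xstar i j).toFinset).card

section Aux
variable {V α : Type*}

lemma isWalk_append (src tgt : α → V) {u w : V} (p q : List α) :
    IsWalk src tgt u w (p ++ q) ↔ ∃ v, IsWalk src tgt u v p ∧ IsWalk src tgt v w q := by
  induction p generalizing u with
  | nil => simp [IsWalk]
  | cons e p ih =>
      constructor
      · rintro ⟨he, hw⟩
        obtain ⟨v, h1, h2⟩ := ih.mp hw
        exact ⟨v, ⟨he, h1⟩, h2⟩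
      · rintro ⟨v, ⟨he, h1⟩, h2⟩
        exact ⟨he, ih.mpr ⟨v, h1, h2⟩⟩

/-- node after `l` arcs -/
def nodeAt (tgt : α → V) (u : V) (p : List α) (l : ℕ) : V :=
  (p.take l).foldl (fun _ e => tgt e) u

@[simp] lemma nodeAt_zero (tgt : α → V) (u : V) (p : List α) : nodeAt tgt u p 0 = u := rfl

@[simp] lemma nodeAt_nil (tgt : α → V) (u : V) (l : ℕ) : nodeAt tgt u ([] : List α) l = u := by
  simp [nodeAt]

@[simp] lemma nodeAt_cons_succ (tgt : α → V) (u : V) (e : α) (p : List α) (l : ℕ) :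
    nodeAt tgt u (e :: p) (l + 1) = nodeAt tgt (tgt e) p l := rfl

lemma walk_take_drop {src tgt : α → V} {u w : V} {p : List α} (h : IsWalk src tgt u w p)
    (l : ℕ) : IsWalk src tgt u (nodeAt tgt u p l) (p.take l) ∧
      IsWalk src tgt (nodeAt tgt u p l) w (p.drop l) := by
  induction p generalizing u l with
  | nil => simpa [IsWalk] using h
  | cons e p ih =>
      obtain ⟨he, h'⟩ := h
      cases l with
      | zero => exact ⟨rfl, he, h'⟩
      | succ l =>
          obtain ⟨h1, h2⟩ := ih h' l
          exact ⟨⟨he, h1⟩, h2⟩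

lemma walk_start_unique {src tgt : α → V} {u u' w : V} {p : List α}
    (h : IsWalk src tgt u w p) (h' : IsWalk src tgt u' w p) : u = u' := by
  cases p with
  | nil => exact h.trans h'.symm
  | cons e p => exact h.1.symm.trans h'.1

lemma nodeAt_length {src tgt : α → V} {u w : V} {p : List α} (h : IsWalk src tgt u w p) :
    nodeAt tgt u p p.length = w := by
  have h2 := (walk_take_drop h p.length).2
  rw [List.drop_length] at h2
  exact h2

variable {layer : V → ℕ}

lemma walk_layer {src tgt : α → V} (hlayer : ∀ e, layer (tgt e) = layer (src e) + 1)
    {u w : V} {p : List α} (h : IsWalk src tgt u w p) :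
    layer w = layer u + p.length := by
  induction p generalizing u with
  | nil => rw [show u = w from h]; simp
  | cons e p ih =>
      obtain ⟨he, h'⟩ := h
      have := ih h'
      rw [this, hlayer e, he]
      simp
      ring

lemma layer_nodeAt {src tgt : α → V} (hlayer : ∀ e, layer (tgt e) = layer (src e) + 1)
    {u w : V} {p : List α} (h : IsWalk src tgt u w p) {l : ℕ} (hl : l ≤ p.length) :
    layer (nodeAt tgt u p l) = layer u + l := by
  have := walk_layer hlayer (walk_take_drop h l).1
  rwa [List.length_take, min_eq_left hl] at this

lemma walk_get {src tgt : α → V} {u w : V} {p : List α} (h : IsWalk src tgt u w p)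
    {m : ℕ} (hm : m < p.length) :
    src (p.get ⟨m, hm⟩) = nodeAt tgt u p m ∧ tgt (p.get ⟨m, hm⟩) = nodeAt tgt u p (m + 1) := by
  have hd : p.drop m = p.get ⟨m, hm⟩ :: p.drop (m + 1) := List.drop_eq_getElem_cons hm
  have h2 := (walk_take_drop h m).2
  rw [hd] at h2
  obtain ⟨hsrc, hrest⟩ := h2
  have h3 := (walk_take_drop h (m + 1)).2
  exact ⟨hsrc, walk_start_unique hrest h3⟩

lemma layer_src_mem {src tgt : α → V} (hlayer : ∀ e, layer (tgt e) = layer (src e) + 1)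
    {u w : V} {p : List α} (h : IsWalk src tgt u w p) {y : α} (hy : y ∈ p) :
    ∃ m < p.length, layer (src y) = layer u + m := by
  obtain ⟨⟨m, hm⟩, hg⟩ := List.mem_iff_get.mp hy
  refine ⟨m, hm, ?_⟩
  rw [← hg, (walk_get h hm).1, layer_nodeAt hlayer h (le_of_lt hm)]

lemma walk_nodup {src tgt : α → V} (hlayer : ∀ e, layer (tgt e) = layer (src e) + 1)
    {u w : V} {p : List α} (h : IsWalk src tgt u w p) :
    (u :: p.map tgt).Nodup := by
  have key : ∀ (p : List α) (u w : V), IsWalk src tgt u w p →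
      (u :: p.map tgt).Pairwise (fun a b => layer a < layer b) := by
    intro p
    induction p with
    | nil => intro u w _; simp
    | cons e q ih =>
        intro u w hw
        obtain ⟨he, h'⟩ := hw
        have hp := ih (tgt e) w h'
        refine List.Pairwise.cons ?_ hp
        intro b hb
        have h1 : layer u < layer (tgt e) := by rw [hlayer e, he]; omega
        rcases List.mem_cons.mp hb with hb | hb
        · exact hb ▸ h1
        · have : layer (tgt e) < layer b := by
            rcases List.mem_map.mp hb with ⟨y, hy, rfl⟩
            obtain ⟨m, hm, hmy⟩ := layer_src_mem hlayer h' hy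
            rw [hlayer y, hmy]
            have := walk_layer hlayer h'
            omega
          exact h1.trans this
  exact (key p u w h).imp (fun hab => fun he => by subst he; exact lt_irrefl _ hab)

lemma bwd {V α : Type*} [Fintype α] [DecidableEq α] (src tgt : α → V)
    (layer : V → ℕ) (k : ℕ)
    (C cbar : α → ℝ) (t : V) (Xstar Ystar : V → V → List α)
    (hXstar : ∀ i j : V, (∃ p : List α, p ≠ [] ∧ IsSimplePath src tgt i j p) →
      Xstar i j ≠ [] ∧ IsSimplePath src tgt i j (Xstar i j) ∧
        ∀ p : List α, p ≠ [] → IsSimplePath src tgt i j p →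
          ((Xstar i j).map C).sum ≤ (p.map C).sum)
    (hYstar : ∀ i j : V, (∃ p : List α, p ≠ [] ∧ IsSimplePath src tgt i j p) →
      Ystar i j ≠ [] ∧ IsSimplePath src tgt i j (Ystar i j) ∧
        ∀ p : List α, p ≠ [] → IsSimplePath src tgt i j p →
          ((Ystar i j).map cbar).sum ≤ (p.map cbar).sum) :
    ∀ (π : List (Step V)) (u : V),
      IsWalk (fun st : Step V => st.1) (fun st : Step V => st.2.1) u t π →
      (∀ st ∈ π, StepValid src tgt layer k st) →
      ∃ X Y : List α, IsWalk src tgt u t X ∧ IsWalk src tgt u t Y ∧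
        (Y.toFinset \ X.toFinset).card ≤ (π.map (stepTime Xstar Ystar)).sum ∧
        (X.map C).sum + (Y.map cbar).sum ≤
          (π.map (stepCost src tgt C cbar Xstar Ystar)).sum := by
  intro π
  induction π with
  | nil =>
      intro u hu _
      exact ⟨[], [], hu, hu, by simp [IsWalk], by simp [IsWalk]⟩
  | cons st π ih =>
      intro u hw hval
      obtain ⟨i, j, b⟩ := st
      obtain ⟨rfl, hπ⟩ := hw
      obtain ⟨X', Y', hX'w, hY'w, hX'c, hX'cost⟩ :=
        ih j hπ (fun st hst => hval st (List.mem_cons_of_mem _ hst))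
      cases b with
      | false =>
          obtain ⟨e, he1, he2⟩ := hval (i, j, false) List.mem_cons_self
          have hSne : {x : ℝ | ∃ e : α, src e = i ∧ tgt e = j ∧ x = C e + cbar e}.Nonempty :=
            ⟨C e + cbar e, e, he1, he2, rfl⟩
          have hSfin : {x : ℝ | ∃ e : α, src e = i ∧ tgt e = j ∧ x = C e + cbar e}.Finite := by
            apply Set.Finite.subset (Set.finite_range (fun e => C e + cbar e))
            rintro x ⟨e, _, _, rfl⟩
            exact ⟨e, rfl⟩
          obtain ⟨e₀, he₀1, he₀2, he₀3⟩ := hSne.csInf_mem hSfin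
          refine ⟨e₀ :: X', e₀ :: Y', ⟨he₀1, he₀2 ▸ hX'w⟩, ⟨he₀1, he₀2 ▸ hY'w⟩, ?_, ?_⟩
          · refine le_trans (Finset.card_le_card ?_) (by simpa [stepTime] using hX'c)
            intro y hy
            simp only [List.toFinset_cons, Finset.mem_sdiff, Finset.mem_insert] at hy ⊢
            rcases hy with ⟨hy1 | hy1, hy2⟩
            · exact absurd (Or.inl hy1) hy2
            · exact ⟨hy1, fun h => hy2 (Or.inr h)⟩
          · simp only [List.map_cons, List.sum_cons, stepCost]
            rw [he₀3]
            linarith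
      | true =>
          obtain ⟨hex, -⟩ := hval (i, j, true) List.mem_cons_self
          obtain ⟨hXne, ⟨hXw, hXnd⟩, hXmin⟩ := hXstar i j hex
          obtain ⟨hYne, ⟨hYw, hYnd⟩, hYmin⟩ := hYstar i j hex
          refine ⟨Xstar i j ++ X', Ystar i j ++ Y',
            (isWalk_append src tgt _ _).mpr ⟨j, hXw, hX'w⟩,
            (isWalk_append src tgt _ _).mpr ⟨j, hYw, hY'w⟩, ?_, ?_⟩
          · have hsub : (Ystar i j ++ Y').toFinset \ (Xstar i j ++ X').toFinset ⊆
                (((Ystar i j).toFinset \ (Xstar i j).toFinset) ∪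
                  (Y'.toFinset \ X'.toFinset)) := by
              intro y hy
              simp only [List.toFinset_append, Finset.mem_sdiff, Finset.mem_union] at hy ⊢
              rcases hy with ⟨hy1 | hy1, hy2⟩
              · exact Or.inl ⟨hy1, fun h => hy2 (Or.inl h)⟩
              · exact Or.inr ⟨hy1, fun h => hy2 (Or.inr h)⟩
            refine le_trans (Finset.card_le_card hsub)
              (le_trans (Finset.card_union_le _ _) ?_)
            simp only [List.map_cons, List.sum_cons, stepTime]
            exact Nat.add_le_add le_rfl hX'c
          · simp only [List.map_cons, List.sum_cons, stepCost, List.map_append,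
              List.sum_append]
            linarith

lemma fwd {V α : Type*} [Fintype α] [DecidableEq α] (src tgt : α → V)
    (layer : V → ℕ) (hlayer : ∀ e, layer (tgt e) = layer (src e) + 1)
    (C cbar : α → ℝ) (t : V) (k : ℕ) (Xstar Ystar : V → V → List α)
    (hXstar : ∀ i j : V, (∃ p : List α, p ≠ [] ∧ IsSimplePath src tgt i j p) →
      Xstar i j ≠ [] ∧ IsSimplePath src tgt i j (Xstar i j) ∧
        ∀ p : List α, p ≠ [] → IsSimplePath src tgt i j p →
          ((Xstar i j).map C).sum ≤ (p.map C).sum)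
    (hYstar : ∀ i j : V, (∃ p : List α, p ≠ [] ∧ IsSimplePath src tgt i j p) →
      Ystar i j ≠ [] ∧ IsSimplePath src tgt i j (Ystar i j) ∧
        ∀ p : List α, p ≠ [] → IsSimplePath src tgt i j p →
          ((Ystar i j).map cbar).sum ≤ (p.map cbar).sum) :
    ∀ (n : ℕ) (X Y : List α) (u : V), X.length ≤ n →
      IsWalk src tgt u t X → IsWalk src tgt u t Y →
      (Y.toFinset \ X.toFinset).card ≤ k →
      ∃ π : List (Step V),
        IsWalk (fun st : Step V => st.1) (fun st : Step V => st.2.1) u t π ∧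
        (∀ st ∈ π, StepValid src tgt layer k st) ∧
        (π.map (stepTime Xstar Ystar)).sum ≤ (Y.toFinset \ X.toFinset).card ∧
        (π.map (stepCost src tgt C cbar Xstar Ystar)).sum ≤
          (X.map C).sum + (Y.map cbar).sum := by
  classical
  intro n
  induction n with
  | zero =>
      intro X Y u hlen hX hY _
      have hXnil : X = [] := List.length_eq_zero_iff.mp (Nat.le_zero.mp hlen)
      subst hXnil
      have hut : u = t := hX
      have hYlen : Y.length = 0 := by
        have := walk_layer hlayer hY
        subst hut; omega
      have hYnil : Y = [] := List.length_eq_zero_iff.mp hYlen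
      subst hYnil
      exact ⟨[], hX, by simp, Nat.zero_le _, by simp⟩
  | succ n ih =>
      intro X Y u hlen hX hY hcard
      cases X with
      | nil =>
          have hut : u = t := hX
          have hYlen : Y.length = 0 := by
            have := walk_layer hlayer hY
            subst hut; omega
          have hYnil : Y = [] := List.length_eq_zero_iff.mp hYlen
          subst hYnil
          exact ⟨[], hX, by simp, Nat.zero_le _, by simp⟩
      | cons e X' =>
          have hXlen := walk_layer hlayer hX
          have hYlen := walk_layer hlayer hY
          have hlen2 : Y.length = (e :: X').length := by omega
          cases Y with
          | nil => simp at hlen2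
          | cons f Y' =>
              by_cases hef : e = f
              · -- same first arc: type-0 step
                subst hef
                obtain ⟨he, hX'w⟩ := hX
                obtain ⟨-, hY'w⟩ := hY
                have hsub : Y'.toFinset \ X'.toFinset ⊆
                    (e :: Y').toFinset \ (e :: X').toFinset := by
                  intro y hy
                  simp only [Finset.mem_sdiff, List.mem_toFinset] at hy
                  obtain ⟨hy1, hy2⟩ := hy
                  have hyne : y ≠ e := by
                    rintro rfl
                    obtain ⟨m, -, hml⟩ := layer_src_mem hlayer hY'w hy1
                    have h2 := hlayer y
                    omega
                  simp only [Finset.mem_sdiff, List.mem_toFinset, List.mem_cons]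
                  exact ⟨Or.inr hy1, fun h => h.elim hyne hy2⟩
                obtain ⟨π', hπw, hπv, hπt, hπc⟩ := ih X' Y' (tgt e)
                  (by simp only [List.length_cons] at hlen; omega) hX'w hY'w
                  (le_trans (Finset.card_le_card hsub) hcard)
                refine ⟨(u, tgt e, false) :: π', ⟨rfl, hπw⟩, ?_, ?_, ?_⟩
                · intro st hst
                  rcases List.mem_cons.mp hst with rfl | hst
                  · exact ⟨e, he, rfl⟩
                  · exact hπv st hst
                · simp only [List.map_cons, List.sum_cons, stepTime]
                  have := le_trans hπt (Finset.card_le_card hsub)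
                  omega
                · simp only [List.map_cons, List.sum_cons, stepCost]
                  have hmem : C e + cbar e ∈ {x : ℝ | ∃ e' : α, src e' = u ∧
                      tgt e' = tgt e ∧ x = C e' + cbar e'} := ⟨e, he, rfl, rfl⟩
                  have hfin : {x : ℝ | ∃ e' : α, src e' = u ∧ tgt e' = tgt e ∧
                      x = C e' + cbar e'}.Finite := by
                    apply Set.Finite.subset (Set.finite_range (fun e' => C e' + cbar e'))
                    rintro x ⟨e', -, -, rfl⟩
                    exact ⟨e', rfl⟩
                  have hinf := csInf_le hfin.bddBelow hmem
                  linarith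
              · -- first arcs differ: type-1 step up to first common node
                have hP : ∃ l, 1 ≤ l ∧
                    nodeAt tgt u (e :: X') l = nodeAt tgt u (f :: Y') l := by
                  refine ⟨(e :: X').length, by simp, ?_⟩
                  rw [nodeAt_length hX, ← hlen2, nodeAt_length hY]
                obtain ⟨l, ⟨hl1, hlw⟩, hlle, hlmin⟩ :
                    ∃ l, (1 ≤ l ∧
                        nodeAt tgt u (e :: X') l = nodeAt tgt u (f :: Y') l) ∧
                      l ≤ (e :: X').length ∧
                      ∀ m < l, ¬(1 ≤ m ∧
                        nodeAt tgt u (e :: X') m = nodeAt tgt u (f :: Y') m) :=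
                  ⟨Nat.find hP, Nat.find_spec hP,
                    Nat.find_min' hP ⟨by simp,
                      by rw [nodeAt_length hX, ← hlen2, nodeAt_length hY]⟩,
                    fun m hm => Nat.find_min hP hm⟩
                have hlleY : l ≤ (f :: Y').length := by omega
                set w := nodeAt tgt u (e :: X') l with hwdef
                have hX1 : IsWalk src tgt u w ((e :: X').take l) :=
                  (walk_take_drop hX l).1
                have hX2 : IsWalk src tgt w t ((e :: X').drop l) :=
                  (walk_take_drop hX l).2
                have hY1 : IsWalk src tgt u w ((f :: Y').take l) := by
                  have h := (walk_take_drop hY l).1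
                  rw [← hlw] at h
                  exact h
                have hY2 : IsWalk src tgt w t ((f :: Y').drop l) := by
                  have h := (walk_take_drop hY l).2
                  rw [← hlw] at h
                  exact h
                have hX1len : ((e :: X').take l).length = l := by
                  rw [List.length_take]; omega
                have hY1len : ((f :: Y').take l).length = l := by
                  rw [List.length_take]; omega
                have hlw2 : layer w = layer u + l := layer_nodeAt hlayer hX hlle
                -- every arc of the first block of Y avoids X
                have hA : ∀ y ∈ (f :: Y').take l, y ∉ (e :: X') := by
                  intro y hy hyX
                  obtain ⟨⟨m, hm⟩, hgm⟩ := List.mem_iff_get.mp hy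
                  have hm2 : m < l := by rw [← hY1len]; exact hm
                  have hm' : m < (f :: Y').length := by omega
                  have hgy : (f :: Y').get ⟨m, hm'⟩ = y := by
                    rw [← hgm, List.get_eq_getElem, List.get_eq_getElem,
                      List.getElem_take]
                  obtain ⟨⟨m', hmX⟩, hgX⟩ := List.mem_iff_get.mp hyX
                  have hsrcY := (walk_get hY hm').1
                  rw [hgy] at hsrcY
                  have hsrcX := (walk_get hX hmX).1
                  rw [hgX] at hsrcX
                  have hlYm : layer (nodeAt tgt u (f :: Y') m) = layer u + m :=
                    layer_nodeAt hlayer hY (le_of_lt hm')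
                  have hlXm : layer (nodeAt tgt u (e :: X') m') = layer u + m' :=
                    layer_nodeAt hlayer hX (le_of_lt hmX)
                  have heq : layer u + m' = layer u + m := by
                    rw [← hlXm, ← hlYm, ← hsrcX, ← hsrcY]
                  have hmm : m' = m := by omega
                  subst hmm
                  have hnode : nodeAt tgt u (e :: X') m' = nodeAt tgt u (f :: Y') m' := by
                    rw [← hsrcX, ← hsrcY]
                  rcases Nat.eq_zero_or_pos m' with rfl | hm1
                  · have h1 : e = y := hgX
                    have h2 : f = y := hgy
                    exact hef (h1.trans h2.symm)
                  · exact hlmin _ hm2 ⟨hm1, hnode⟩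
                -- cardinalities
                have hYtnd : ((f :: Y').take l).Nodup :=
                  ((List.nodup_cons.mp (walk_nodup hlayer hY1)).2).of_map _
                have hYtcard : ((f :: Y').take l).toFinset.card = l := by
                  rw [List.toFinset_card_of_nodup hYtnd, hY1len]
                have hsub1 : ((f :: Y').take l).toFinset ⊆
                    (f :: Y').toFinset \ (e :: X').toFinset := by
                  intro y hy
                  rw [List.mem_toFinset] at hy
                  rw [Finset.mem_sdiff, List.mem_toFinset, List.mem_toFinset]
                  exact ⟨List.mem_of_mem_take hy, hA y hy⟩
                have hsub2 : ((f :: Y').drop l).toFinset \ ((e :: X').drop l).toFinset ⊆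
                    (f :: Y').toFinset \ (e :: X').toFinset := by
                  intro y hy
                  rw [Finset.mem_sdiff, List.mem_toFinset, List.mem_toFinset] at hy ⊢
                  obtain ⟨hy1, hy2⟩ := hy
                  refine ⟨List.mem_of_mem_drop hy1, ?_⟩
                  intro hyX
                  have hyX' : y ∈ (e :: X').take l ++ (e :: X').drop l := by
                    rw [List.take_append_drop]; exact hyX
                  rcases List.mem_append.mp hyX' with h | h
                  · obtain ⟨mX, hmX, hlX⟩ := layer_src_mem hlayer hX1 h
                    obtain ⟨mY, hmY, hlY⟩ := layer_src_mem hlayer hY2 hy1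
                    rw [hlw2] at hlY
                    rw [hX1len] at hmX
                    omega
                  · exact hy2 h
                have hdisj : Disjoint ((f :: Y').take l).toFinset
                    (((f :: Y').drop l).toFinset \ ((e :: X').drop l).toFinset) := by
                  rw [Finset.disjoint_left]
                  intro y hy1 hy2
                  rw [List.mem_toFinset] at hy1
                  rw [Finset.mem_sdiff, List.mem_toFinset] at hy2
                  obtain ⟨mX, hmX, hlX⟩ := layer_src_mem hlayer hY1 hy1
                  obtain ⟨mY, hmY, hlY⟩ := layer_src_mem hlayer hY2 hy2.1
                  rw [hY1len] at hmX
                  rw [hlw2] at hlY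
                  omega
                have hcount : l + (((f :: Y').drop l).toFinset \
                    ((e :: X').drop l).toFinset).card ≤
                    ((f :: Y').toFinset \ (e :: X').toFinset).card := by
                  have h := Finset.card_le_card (Finset.union_subset hsub1 hsub2)
                  rw [Finset.card_union_of_disjoint hdisj, hYtcard] at h
                  exact h
                -- shortest paths for the block
                have hXtake_ne : (e :: X').take l ≠ [] := by
                  intro h; rw [h] at hX1len; simp at hX1len; omega
                have hYtake_ne : (f :: Y').take l ≠ [] := by
                  intro h; rw [h] at hY1len; simp at hY1len; omega
                have hex : ∃ p : List α, p ≠ [] ∧ IsSimplePath src tgt u w p :=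
                  ⟨(e :: X').take l, hXtake_ne, hX1, walk_nodup hlayer hX1⟩
                obtain ⟨hXsne, ⟨hXsw, hXsnd⟩, hXsmin⟩ := hXstar u w hex
                obtain ⟨hYsne, ⟨hYsw, hYsnd⟩, hYsmin⟩ := hYstar u w hex
                have hYslen : (Ystar u w).length = l := by
                  have := walk_layer hlayer hYsw; omega
                have htime : ((Ystar u w).toFinset \ (Xstar u w).toFinset).card ≤ l := by
                  calc ((Ystar u w).toFinset \ (Xstar u w).toFinset).card
                      ≤ (Ystar u w).toFinset.card :=
                        Finset.card_le_card Finset.sdiff_subset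
                    _ ≤ (Ystar u w).length := (Ystar u w).toFinset_card_le
                    _ = l := hYslen
                -- recursion on the remainder
                obtain ⟨π', hπw, hπv, hπt, hπc⟩ := ih ((e :: X').drop l)
                  ((f :: Y').drop l) w
                  (by rw [List.length_drop]; simp only [List.length_cons] at hlen ⊢; omega)
                  hX2 hY2 (le_trans (by omega) hcard)
                refine ⟨(u, w, true) :: π', ⟨rfl, hπw⟩, ?_, ?_, ?_⟩
                · intro st hst
                  rcases List.mem_cons.mp hst with rfl | hst
                  · exact ⟨hex, by rw [hlw2]; omega⟩
                  · exact hπv st hst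
                · simp only [List.map_cons, List.sum_cons, stepTime]
                  omega
                · simp only [List.map_cons, List.sum_cons, stepCost]
                  have hc1 := hXsmin ((e :: X').take l) hXtake_ne
                    ⟨hX1, walk_nodup hlayer hX1⟩
                  have hc2 := hYsmin ((f :: Y').take l) hYtake_ne
                    ⟨hY1, walk_nodup hlayer hY1⟩
                  have hsplitX : ((e :: X').map C).sum =
                      (((e :: X').take l).map C).sum + (((e :: X').drop l).map C).sum := by
                    rw [← List.sum_append, ← List.map_append, List.take_append_drop]
                  have hsplitY : ((f :: Y').map cbar).sum =
                      (((f :: Y').take l).map cbar).sum +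
                        (((f :: Y').drop l).map cbar).sum := by
                    rw [← List.sum_append, ← List.map_append, List.take_append_drop]
                  simp only [List.map_cons, List.sum_cons] at hsplitX hsplitY
                  linarith

end Aux

/-- (Reduction correctness, layered case.) Let `G` be a
layered multidigraph and `G'` the auxiliary graph described above, where
`X*_{ij}` (resp. `Y*_{ij}`) is a shortest `i`-`j` path for the costs `C`
(resp. `c̄`). Then there are paths `X ∈ Φ` and `Y ∈ Φ(X,k)` in `G` with
`Σ_{e∈X} C_e + Σ_{e∈Y} c̄_e ≤ UB` iff there is an `s`-`t` path `π` in `G'`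
with total transition time at most `k` and total cost at most `UB`. -/
theorem layered_reduction_equivalence
    {V α : Type*} [Fintype α] [DecidableEq α] (src tgt : α → V)
    (layer : V → ℕ) (hlayer : ∀ e, layer (tgt e) = layer (src e) + 1)
    (C cbar : α → ℝ) (s t : V) (hst : s ≠ t) (k : ℕ) (hk : 1 ≤ k) (UB : ℝ)
    (Xstar Ystar : V → V → List α)
    (hXstar : ∀ i j : V, (∃ p : List α, p ≠ [] ∧ IsSimplePath src tgt i j p) →
      Xstar i j ≠ [] ∧ IsSimplePath src tgt i j (Xstar i j) ∧
        ∀ p : List α, p ≠ [] → IsSimplePath src tgt i j p →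
          ((Xstar i j).map C).sum ≤ (p.map C).sum)
    (hYstar : ∀ i j : V, (∃ p : List α, p ≠ [] ∧ IsSimplePath src tgt i j p) →
      Ystar i j ≠ [] ∧ IsSimplePath src tgt i j (Ystar i j) ∧
        ∀ p : List α, p ≠ [] → IsSimplePath src tgt i j p →
          ((Ystar i j).map cbar).sum ≤ (p.map cbar).sum) :
    (∃ X Y : List α, IsSimplePath src tgt s t X ∧ IsSimplePath src tgt s t Y ∧
        (Y.toFinset \ X.toFinset).card ≤ k ∧
        (X.map C).sum + (Y.map cbar).sum ≤ UB) ↔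
    (∃ π : List (Step V),
        IsWalk (fun st : Step V => st.1) (fun st : Step V => st.2.1) s t π ∧
        (∀ st ∈ π, StepValid src tgt layer k st) ∧
        (π.map (stepTime Xstar Ystar)).sum ≤ k ∧
        (π.map (stepCost src tgt C cbar Xstar Ystar)).sum ≤ UB) := by
  constructor
  · rintro ⟨X, Y, ⟨hXw, hXnd⟩, ⟨hYw, hYnd⟩, hc, hcost⟩
    obtain ⟨π, hπw, hπv, hπt, hπc⟩ := fwd src tgt layer hlayer C cbar t k
      Xstar Ystar hXstar hYstar X.length X Y s le_rfl hXw hYw hc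
    exact ⟨π, hπw, hπv, le_trans hπt hc, le_trans hπc hcost⟩
  · rintro ⟨π, hπw, hπv, hπt, hπc⟩
    obtain ⟨X, Y, hXw, hYw, hc, hcost⟩ := bwd src tgt layer k C cbar t
      Xstar Ystar hXstar hYstar π s hπw hπv
    exact ⟨X, Y, ⟨hXw, walk_nodup hlayer hXw⟩, ⟨hYw, walk_nodup hlayer hYw⟩,
      le_trans hc hπt, le_trans hcost hπc⟩
end

section
/- Series composition correctness for the recoverable pair values: if G is the series composition of G₁ and G₂, then for every 0 ≤ l ≤ k, the minimum over pairs of source-sink paths X, Y in G with |Y \ X| = l of (Σ_{e∈X} C_e + Σ_{e∈Y} c̄_e) equals min over 0 ≤ j ≤ l of (c*_{G₁}[j] + c*_{G₂}[l−j]), where c*_{G_i}[j] is the analogous minimum over pairs X_i, Y_i of source-sink paths of G_i with |Y_i \ X_i| = j (with convention +∞ when no such pair exists). -/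
/-- `c*_G[l]`: the minimum of `Σ_{e∈X} C_e + Σ_{e∈Y} c̄_e` over pairs of
source-sink paths `X, Y` of `G` (as arc sets, `P` the set of source-sink
paths) with `|Y \ X| = l`; `⊤` when no such pair exists. -/
noncomputable def cstarVal {α : Type*} [DecidableEq α] (C cbar : α → ℝ)
    (P : Set (Finset α)) (l : ℕ) : EReal :=
  sInf {x : EReal | ∃ X ∈ P, ∃ Y ∈ P, (Y \ X).card = l ∧
    x = (((∑ e ∈ X, C e) + ∑ e ∈ Y, cbar e : ℝ) : EReal)}

private lemma cstar_le {α : Type*} [DecidableEq α] (C cbar : α → ℝ)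
    {P : Set (Finset α)} {l : ℕ} {X Y : Finset α} (hX : X ∈ P) (hY : Y ∈ P)
    (hc : (Y \ X).card = l) :
    cstarVal C cbar P l ≤ (((∑ e ∈ X, C e) + ∑ e ∈ Y, cbar e : ℝ) : EReal) :=
  sInf_le ⟨X, hX, Y, hY, hc, rfl⟩

private lemma cstar_mem_or_top {α : Type*} [DecidableEq α] (C cbar : α → ℝ)
    {P : Set (Finset α)} (hfin : P.Finite) (l : ℕ) :
    cstarVal C cbar P l = ⊤ ∨
      ∃ X ∈ P, ∃ Y ∈ P, (Y \ X).card = l ∧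
        cstarVal C cbar P l = (((∑ e ∈ X, C e) + ∑ e ∈ Y, cbar e : ℝ) : EReal) := by
  classical
  set S : Set EReal := {x : EReal | ∃ X ∈ P, ∃ Y ∈ P, (Y \ X).card = l ∧
    x = (((∑ e ∈ X, C e) + ∑ e ∈ Y, cbar e : ℝ) : EReal)} with hS
  rcases S.eq_empty_or_nonempty with h | h
  · left
    rw [cstarVal, ← hS, h, sInf_empty]
  · right
    have hSfin : S.Finite := by
      apply Set.Finite.subset ((hfin.prod hfin).image
        (fun p : Finset α × Finset α =>
          (((∑ e ∈ p.1, C e) + ∑ e ∈ p.2, cbar e : ℝ) : EReal)))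
      rintro x ⟨X, hX, Y, hY, -, rfl⟩
      exact ⟨(X, Y), ⟨hX, hY⟩, rfl⟩
    have hmem : sInf S ∈ S := h.csInf_mem hSfin
    obtain ⟨X, hX, Y, hY, hc, hx⟩ := hmem
    exact ⟨X, hX, Y, hY, hc, hx⟩

private lemma cstar_ne_bot {α : Type*} [DecidableEq α] (C cbar : α → ℝ)
    {P : Set (Finset α)} (hfin : P.Finite) (l : ℕ) :
    cstarVal C cbar P l ≠ ⊥ := by
  rcases cstar_mem_or_top C cbar hfin l with h | ⟨X, _, Y, _, _, h⟩ <;> rw [h] <;> simp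

private lemma sdiff_union_card {α : Type*} [DecidableEq α] {A₁ A₂ : Set α}
    (hA : Disjoint A₁ A₂) {X₁ Y₁ X₂ Y₂ : Finset α}
    (hX₁ : ↑X₁ ⊆ A₁) (hY₁ : ↑Y₁ ⊆ A₁) (hX₂ : ↑X₂ ⊆ A₂) (hY₂ : ↑Y₂ ⊆ A₂) :
    ((Y₁ ∪ Y₂) \ (X₁ ∪ X₂)).card = (Y₁ \ X₁).card + (Y₂ \ X₂).card := by
  have h12 : ∀ a ∈ Y₁, a ∉ X₂ := fun a ha hb =>
    hA.ne_of_mem (hY₁ ha) (hX₂ hb) rfl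
  have h21 : ∀ a ∈ Y₂, a ∉ X₁ := fun a ha hb =>
    hA.ne_of_mem (hX₁ hb) (hY₂ ha) rfl
  have heq : (Y₁ ∪ Y₂) \ (X₁ ∪ X₂) = (Y₁ \ X₁) ∪ (Y₂ \ X₂) := by
    ext a
    simp only [Finset.mem_sdiff, Finset.mem_union, not_or]
    constructor
    · rintro ⟨ha | ha, h1, h2⟩
      · exact Or.inl ⟨ha, h1⟩
      · exact Or.inr ⟨ha, h2⟩
    · rintro (⟨ha, h1⟩ | ⟨ha, h2⟩)
      · exact ⟨Or.inl ha, h1, h12 a ha⟩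
      · exact ⟨Or.inr ha, h21 a ha, h2⟩
  rw [heq, Finset.card_union_of_disjoint]
  refine Finset.disjoint_coe.mp (Set.disjoint_of_subset ?_ ?_ hA)
  · exact fun a ha => hY₁ (Finset.mem_sdiff.mp ha).1
  · exact fun a ha => hY₂ (Finset.mem_sdiff.mp ha).1

/-- If `G` is the series composition of `G₁` and `G₂` (with
disjoint arc sets, every source-sink path of `G` being the concatenation of
one of `G₁` and one of `G₂`), then for every `0 ≤ l ≤ k`,
`c*_G[l] = min_{0 ≤ j ≤ l} (c*_{G₁}[j] + c*_{G₂}[l-j])`. -/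
theorem series_recoverable_pair_value
    {α : Type*} [DecidableEq α] (C cbar : α → ℝ) (k : ℕ)
    (A₁ A₂ : Set α) (hA : Disjoint A₁ A₂)
    (P₁ P₂ P : Set (Finset α)) (hfin₁ : P₁.Finite) (hfin₂ : P₂.Finite)
    (hP₁ : ∀ Y ∈ P₁, ↑Y ⊆ A₁) (hP₂ : ∀ Y ∈ P₂, ↑Y ⊆ A₂)
    (hP : P = {Y | ∃ Y₁ ∈ P₁, ∃ Y₂ ∈ P₂, Y = Y₁ ∪ Y₂})
    (l : ℕ) (hl : l ≤ k) :
    cstarVal C cbar P l =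
      (Finset.range (l + 1)).inf
        (fun j => cstarVal C cbar P₁ j + cstarVal C cbar P₂ (l - j)) := by
  classical
  have hdisj : ∀ {U V : Finset α}, U ∈ P₁ → V ∈ P₂ → Disjoint U V := by
    intro U V hU hV
    exact Finset.disjoint_coe.mp (Set.disjoint_of_subset (hP₁ U hU) (hP₂ V hV) hA)
  apply le_antisymm
  · -- LHS ≤ each term of the inf
    apply Finset.le_inf
    intro j hj
    have hjl : j ≤ l := Nat.lt_succ_iff.mp (Finset.mem_range.mp hj)
    rcases cstar_mem_or_top C cbar hfin₁ j with h1 | ⟨X₁, hX₁, Y₁, hY₁, hc₁, h1⟩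
    · rw [h1, EReal.top_add_of_ne_bot (cstar_ne_bot C cbar hfin₂ (l - j))]
      exact le_top
    rcases cstar_mem_or_top C cbar hfin₂ (l - j) with h2 | ⟨X₂, hX₂, Y₂, hY₂, hc₂, h2⟩
    · rw [h2, EReal.add_top_of_ne_bot (cstar_ne_bot C cbar hfin₁ j)]
      exact le_top
    rw [h1, h2]
    have hXmem : X₁ ∪ X₂ ∈ P := by rw [hP]; exact ⟨X₁, hX₁, X₂, hX₂, rfl⟩
    have hYmem : Y₁ ∪ Y₂ ∈ P := by rw [hP]; exact ⟨Y₁, hY₁, Y₂, hY₂, rfl⟩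
    have hcard : ((Y₁ ∪ Y₂) \ (X₁ ∪ X₂)).card = l := by
      rw [sdiff_union_card hA (hP₁ X₁ hX₁) (hP₁ Y₁ hY₁) (hP₂ X₂ hX₂) (hP₂ Y₂ hY₂),
        hc₁, hc₂, Nat.add_sub_cancel' hjl]
    refine le_trans (cstar_le C cbar hXmem hYmem hcard) ?_
    rw [Finset.sum_union (hdisj hX₁ hX₂), Finset.sum_union (hdisj hY₁ hY₂),
      ← EReal.coe_add]
    apply le_of_eq
    norm_cast
    ring
  · -- RHS ≤ LHS
    apply le_sInf
    rintro x ⟨X, hX, Y, hY, hcard, rfl⟩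
    rw [hP] at hX hY
    obtain ⟨X₁, hX₁, X₂, hX₂, rfl⟩ := hX
    obtain ⟨Y₁, hY₁, Y₂, hY₂, rfl⟩ := hY
    have hcard' : (Y₁ \ X₁).card + (Y₂ \ X₂).card = l := by
      rw [← sdiff_union_card hA (hP₁ X₁ hX₁) (hP₁ Y₁ hY₁) (hP₂ X₂ hX₂) (hP₂ Y₂ hY₂),
        hcard]
    set j := (Y₁ \ X₁).card with hj
    have hjl : j ≤ l := le_of_add_le_left hcard'.le
    have hj2 : (Y₂ \ X₂).card = l - j := by omega
    refine le_trans (Finset.inf_le (Finset.mem_range.mpr (Nat.lt_succ_of_le hjl))) ?_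
    refine le_trans (add_le_add (cstar_le C cbar hX₁ hY₁ rfl)
      (cstar_le C cbar hX₂ hY₂ hj2)) ?_
    rw [Finset.sum_union (hdisj hX₁ hX₂), Finset.sum_union (hdisj hY₁ hY₂),
      ← EReal.coe_add]
    apply le_of_eq
    norm_cast
    ring
end

section
/- Parallel composition correctness for the recoverable pair values: if G is the parallel composition of G₁ and G₂, then for every 1 ≤ l ≤ k, the minimum over pairs of source-sink paths X, Y in G with |Y \ X| = l of (Σ_{e∈X} C_e + Σ_{e∈Y} c̄_e) equals the minimum of the four quantities c*_{G₁}[l], c*_{G₂}[l], C_{G₁} + c̄_{G₂}[l], and C_{G₂} + c̄_{G₁}[l]. -/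
/-- Minimum first-stage (`C`) cost of a source-sink path (`⊤` if none). -/
noncomputable def CVal {α : Type*} (C : α → ℝ) (P : Set (Finset α)) : EReal :=
  sInf {x : EReal | ∃ X ∈ P, x = ((∑ e ∈ X, C e : ℝ) : EReal)}

/-- `c̄_G[l]`: minimum `c̄`-cost of a source-sink path with exactly `l` arcs. -/
noncomputable def cbarVal {α : Type*} (cbar : α → ℝ)
    (P : Set (Finset α)) (l : ℕ) : EReal :=
  sInf {x : EReal | ∃ Y ∈ P, Y.card = l ∧ x = ((∑ e ∈ Y, cbar e : ℝ) : EReal)}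

private lemma sInf_ne_bot_of_coe {s : Set EReal} (hfin : s.Finite)
    (h : ∀ x ∈ s, ∃ r : ℝ, x = (r : EReal)) : sInf s ≠ ⊥ := by
  rcases s.eq_empty_or_nonempty with rfl | hne
  · simp
  · obtain ⟨r, hr⟩ := h _ (hne.csInf_mem hfin)
    simp [hr]

private lemma cross_le {α : Type*} (C cbar : α → ℝ) (l : ℕ)
    (P Q : Set (Finset α)) (hfinP : P.Finite) (hfinQ : Q.Finite)
    (S : Set EReal)
    (hSmem : ∀ X ∈ P, ∀ Y ∈ Q, Y.card = l →
      (((∑ e ∈ X, C e) + ∑ e ∈ Y, cbar e : ℝ) : EReal) ∈ S) :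
    sInf S ≤ CVal C P + cbarVal cbar Q l := by
  set A : Set EReal := {x : EReal | ∃ X ∈ P, x = ((∑ e ∈ X, C e : ℝ) : EReal)} with hAdef
  set B : Set EReal := {x : EReal | ∃ Y ∈ Q, Y.card = l ∧
      x = ((∑ e ∈ Y, cbar e : ℝ) : EReal)} with hBdef
  have hAfin : A.Finite := by
    apply (hfinP.image (fun X => ((∑ e ∈ X, C e : ℝ) : EReal))).subset
    rintro x ⟨X, hX, rfl⟩; exact ⟨X, hX, rfl⟩
  have hBfin : B.Finite := by
    apply (hfinQ.image (fun Y => ((∑ e ∈ Y, cbar e : ℝ) : EReal))).subset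
    rintro x ⟨Y, hY, _, rfl⟩; exact ⟨Y, hY, rfl⟩
  have hAbot : sInf A ≠ ⊥ := by
    apply sInf_ne_bot_of_coe hAfin
    rintro x ⟨X, hX, rfl⟩; exact ⟨_, rfl⟩
  have hBbot : sInf B ≠ ⊥ := by
    apply sInf_ne_bot_of_coe hBfin
    rintro x ⟨Y, hY, _, rfl⟩; exact ⟨_, rfl⟩
  rcases A.eq_empty_or_nonempty with hAe | hAne
  · have : CVal C P = (⊤ : EReal) := by
      rw [CVal, ← hAdef, hAe, sInf_empty]
    have hB' : cbarVal cbar Q l = sInf B := rfl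
    rw [this, hB', EReal.top_add_of_ne_bot hBbot]
    exact le_top
  rcases B.eq_empty_or_nonempty with hBe | hBne
  · have : cbarVal cbar Q l = (⊤ : EReal) := by
      rw [cbarVal, ← hBdef, hBe, sInf_empty]
    have hA' : CVal C P = sInf A := rfl
    rw [this, hA', EReal.add_top_of_ne_bot hAbot]
    exact le_top
  obtain ⟨X, hX, hXa⟩ := hAne.csInf_mem hAfin
  obtain ⟨Y, hY, hYl, hYb⟩ := hBne.csInf_mem hBfin
  have : CVal C P + cbarVal cbar Q l =
      (((∑ e ∈ X, C e) + ∑ e ∈ Y, cbar e : ℝ) : EReal) := by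
    rw [CVal, ← hAdef, cbarVal, ← hBdef, hXa, hYb, ← EReal.coe_add]
  rw [this]
  exact sInf_le (hSmem X hX Y hY hYl)

/-- If `G` is the parallel composition of `G₁` and `G₂`
(arc-disjoint; source-sink paths of `G` = disjoint union of those of `G₁`
and `G₂`), then for every `1 ≤ l ≤ k`,
`c*_G[l] = min (c*_{G₁}[l], c*_{G₂}[l], C_{G₁} + c̄_{G₂}[l], C_{G₂} + c̄_{G₁}[l])`. -/
theorem parallel_recoverable_pair_value
    {α : Type*} [DecidableEq α] (C cbar : α → ℝ) (k : ℕ)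
    (A₁ A₂ : Set α) (hA : Disjoint A₁ A₂)
    (P₁ P₂ : Set (Finset α)) (hfin₁ : P₁.Finite) (hfin₂ : P₂.Finite)
    (hP₁ : ∀ Y ∈ P₁, ↑Y ⊆ A₁) (hP₂ : ∀ Y ∈ P₂, ↑Y ⊆ A₂)
    (l : ℕ) (hl1 : 1 ≤ l) (hlk : l ≤ k) :
    cstarVal C cbar (P₁ ∪ P₂) l =
      min (min (cstarVal C cbar P₁ l) (cstarVal C cbar P₂ l))
          (min (CVal C P₁ + cbarVal cbar P₂ l)
               (CVal C P₂ + cbarVal cbar P₁ l)) := by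
  classical
  have hdisj12 : ∀ X ∈ P₁, ∀ Y ∈ P₂, Y \ X = Y := by
    intro X hX Y hY
    rw [Finset.sdiff_eq_self_iff_disjoint]
    exact Finset.disjoint_coe.mp
      (Set.disjoint_of_subset (hP₂ Y hY) (hP₁ X hX) hA.symm)
  have hdisj21 : ∀ X ∈ P₂, ∀ Y ∈ P₁, Y \ X = Y := by
    intro X hX Y hY
    rw [Finset.sdiff_eq_self_iff_disjoint]
    exact Finset.disjoint_coe.mp
      (Set.disjoint_of_subset (hP₁ Y hY) (hP₂ X hX) hA)
  apply le_antisymm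
  · refine le_min (le_min ?_ ?_) (le_min ?_ ?_)
    · apply sInf_le_sInf
      rintro x ⟨X, hX, Y, hY, hc, rfl⟩
      exact ⟨X, Or.inl hX, Y, Or.inl hY, hc, rfl⟩
    · apply sInf_le_sInf
      rintro x ⟨X, hX, Y, hY, hc, rfl⟩
      exact ⟨X, Or.inr hX, Y, Or.inr hY, hc, rfl⟩
    · apply cross_le C cbar l P₁ P₂ hfin₁ hfin₂
      intro X hX Y hY hYl
      exact ⟨X, Or.inl hX, Y, Or.inr hY, by rw [hdisj12 X hX Y hY]; exact hYl, rfl⟩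
    · apply cross_le C cbar l P₂ P₁ hfin₂ hfin₁
      intro X hX Y hY hYl
      exact ⟨X, Or.inr hX, Y, Or.inl hY, by rw [hdisj21 X hX Y hY]; exact hYl, rfl⟩
  · apply le_sInf
    rintro x ⟨X, hX, Y, hY, hc, rfl⟩
    rcases hX with hX | hX <;> rcases hY with hY | hY
    · exact le_trans (min_le_left _ _) (le_trans (min_le_left _ _)
        (sInf_le ⟨X, hX, Y, hY, hc, rfl⟩))
    · refine le_trans (min_le_right _ _) (le_trans (min_le_left _ _) ?_)
      have h1 : CVal C P₁ ≤ ((∑ e ∈ X, C e : ℝ) : EReal) := sInf_le ⟨X, hX, rfl⟩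
      have h2 : cbarVal cbar P₂ l ≤ ((∑ e ∈ Y, cbar e : ℝ) : EReal) := by
        refine sInf_le ⟨Y, hY, ?_, rfl⟩
        rw [← hdisj12 X hX Y hY]; exact hc
      calc CVal C P₁ + cbarVal cbar P₂ l
          ≤ ((∑ e ∈ X, C e : ℝ) : EReal) + ((∑ e ∈ Y, cbar e : ℝ) : EReal) :=
            add_le_add h1 h2
        _ = _ := by rw [← EReal.coe_add]
    · refine le_trans (min_le_right _ _) (le_trans (min_le_right _ _) ?_)
      have h1 : CVal C P₂ ≤ ((∑ e ∈ X, C e : ℝ) : EReal) := sInf_le ⟨X, hX, rfl⟩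
      have h2 : cbarVal cbar P₁ l ≤ ((∑ e ∈ Y, cbar e : ℝ) : EReal) := by
        refine sInf_le ⟨Y, hY, ?_, rfl⟩
        rw [← hdisj21 X hX Y hY]; exact hc
      calc CVal C P₂ + cbarVal cbar P₁ l
          ≤ ((∑ e ∈ X, C e : ℝ) : EReal) + ((∑ e ∈ Y, cbar e : ℝ) : EReal) :=
            add_le_add h1 h2
        _ = _ := by rw [← EReal.coe_add]
    · exact le_trans (min_le_left _ _) (le_trans (min_le_right _ _)
        (sInf_le ⟨X, hX, Y, hY, hc, rfl⟩))
end
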